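/- Let R be a finite commutative Frobenius ring of characteristic 2 and G a finite group of order n. For v ∈ RG, the matrix [I_n | σ(v)] generates a self-dual code over R if and only if v·v^T = 1, i.e. v is a unitary unit in RG. -/

import Mathlib

/-- The matrix σ(v) of a group ring element, with (i,j) entry the coefficient of i⁻¹ * j. -/
noncomputable def sigmaMat {R G : Type*} [Semiring R] [Group G] (v : MonoidAlgebra R G) :
    Matrix G G R := Matrix.of fun i j => v.coeff (i⁻¹ * j)

/-- The canonical involution on a group ring, sending Σ αᵢ gᵢ to Σ αᵢ gᵢ⁻¹. -/
noncomputable def transInvol {R G : Type*} [Semiring R] [Group G] (v : MonoidAlgebra R G) :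
    MonoidAlgebra R G := MonoidAlgebra.ofCoeff (Finsupp.equivMapDomain (Equiv.inv G) v.coeff)
/-- The Euclidean dual of a linear code C ⊆ R^ι. -/
noncomputable def dualCode {R ι : Type*} [CommRing R] [Fintype ι] (C : Submodule R (ι → R)) :
    Submodule R (ι → R) where
  carrier := {x | ∀ c ∈ C, ∑ i, x i * c i = 0}
  add_mem' := by
    intro a b ha hb c hc
    have h1 := ha c hc
    have h2 := hb c hc
    simp only [Pi.add_apply, add_mul, Finset.sum_add_distrib, h1, h2, add_zero]
  zero_mem' := by intro c hc; simp
  smul_mem' := by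
    intro r x hx c hc
    have h := hx c hc
    simp only [Pi.smul_apply, smul_eq_mul, mul_assoc]
    rw [← Finset.mul_sum, h, mul_zero]

/-! `σ` is an injective ring homomorphism `RG → Matrix G G R` turning the involution `ᵀ` into
transposition. Hence the Gram matrix of the rows of `[1 | σ(v)]` is
`1 + σ(v) σ(v)ᵀ = 1 + σ(v vᵀ)`, which in characteristic 2 vanishes exactly when `v vᵀ = 1`:
the code is self-orthogonal iff `v` is unitary. Its rows are independent, so it has `|R|^n`
elements, and the Frobenius identity `|C| |C^⊥| = |R|^(2n)` gives its dual the same size;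
a self-orthogonal code is then self-dual. -/

open Matrix Submodule

section GroupRing

variable {R G : Type*} [Semiring R] [Group G]

@[simp]
lemma sigmaMat_apply (v : MonoidAlgebra R G) (i j : G) : sigmaMat v i j = v.coeff (i⁻¹ * j) :=
  rfl

lemma sigmaMat_injective : Function.Injective (sigmaMat (R := R) (G := G)) := by
  intro v w h
  ext g
  simpa using congr_fun₂ h 1 g

lemma sigmaMat_one [DecidableEq G] : sigmaMat (1 : MonoidAlgebra R G) = 1 := by
  ext i j
  simp [MonoidAlgebra.one_def, one_apply, Finsupp.single_apply, inv_mul_eq_one, eq_comm]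

lemma sigmaMat_transInvol (v : MonoidAlgebra R G) : sigmaMat (transInvol v) = (sigmaMat v)ᵀ := by
  ext i j
  simp [transInvol]

lemma sigmaMat_mul [Fintype G] (v w : MonoidAlgebra R G) :
    sigmaMat (v * w) = sigmaMat v * sigmaMat w := by
  ext i j
  rw [sigmaMat_apply, MonoidAlgebra.coeff_mul_apply_left, Finsupp.sum_fintype _ _ (by simp),
    mul_apply, ← Fintype.sum_equiv (Equiv.mulLeft i⁻¹) _ _ (fun _ => rfl)]
  simp [mul_assoc]

end GroupRing

section Codes

variable {R ι κ : Type*} [CommRing R]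

lemma mem_dualCode_span [Fintype ι] {s : Set (ι → R)} {x : ι → R} :
    x ∈ dualCode (span R s) ↔ ∀ c ∈ s, x ⬝ᵥ c = 0 := by
  change span R s ≤ LinearMap.ker (dotProductBilin R R x) ↔ _
  rw [span_le]
  rfl

lemma span_rows_le_dualCode_iff [Fintype ι] (M : Matrix κ ι R) :
    span R (Set.range fun i => M i) ≤ dualCode (span R (Set.range fun i => M i)) ↔
      M * Mᵀ = 0 := by
  rw [span_le, Set.range_subset_iff, ← Matrix.ext_iff]
  simp only [SetLike.mem_coe, mem_dualCode_span, Set.forall_mem_range]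
  rfl

lemma dualCode_map_funCongrLeft [Fintype ι] [Fintype κ] (e : κ ≃ ι) (C : Submodule R (ι → R)) :
    dualCode (C.map (LinearEquiv.funCongrLeft R R e).toLinearMap) =
      (dualCode C).map (LinearEquiv.funCongrLeft R R e).toLinearMap := by
  ext x
  rw [mem_map_equiv]
  change (∀ c ∈ C.map _, x ⬝ᵥ c = 0) ↔ ∀ c ∈ C, _ ⬝ᵥ c = 0
  simp only [mem_map, forall_exists_index, and_imp, forall_apply_eq_imp_iff₂]
  refine forall₂_congr fun c _ => ?_
  change x ⬝ᵥ c ∘ e = 0 ↔ x ∘ e.symm ⬝ᵥ c = 0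
  rw [comp_equiv_symm_dotProduct]

lemma card_map_funCongrLeft (e : κ ≃ ι) (C : Submodule R (ι → R)) :
    Nat.card (C.map (LinearEquiv.funCongrLeft R R e).toLinearMap) = Nat.card C :=
  Nat.card_congr ((LinearEquiv.funCongrLeft R R e).submoduleMap C).toEquiv.symm

-- `hFrob` only quantifies over `Type`; relabelling the coordinates by `Fin (card ι)` frees it.
lemma card_mul_card_dualCode [Fintype ι]
    (hFrob : ∀ (ι : Type) [Fintype ι] (C : Submodule R (ι → R)),
      Nat.card C * Nat.card (dualCode C) = Nat.card R ^ Fintype.card ι)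
    (C : Submodule R (ι → R)) :
    Nat.card C * Nat.card (dualCode C) = Nat.card R ^ Fintype.card ι := by
  have h := hFrob _ (C.map (LinearEquiv.funCongrLeft R R (Fintype.equivFin ι).symm).toLinearMap)
  rwa [dualCode_map_funCongrLeft, card_map_funCongrLeft, card_map_funCongrLeft,
    Fintype.card_fin] at h

lemma card_span_rows [Fintype κ] (M : Matrix κ ι R) (hM : Function.Injective M.vecMul) :
    Nat.card (span R (Set.range fun i => M i)) = Nat.card R ^ Fintype.card κ := by
  rw [← Nat.card_eq_fintype_card, ← Nat.card_fun, ← row_def, ← range_vecMulLinear]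
  exact (Nat.card_congr (LinearEquiv.ofInjective M.vecMulLinear hM).toEquiv).symm

lemma vecMul_fromCols_one_injective [Fintype κ] [DecidableEq κ] (A : Matrix κ ι R) :
    Function.Injective (fromCols (1 : Matrix κ κ R) A).vecMul := fun x y h => by
  simpa using congr_arg (· ∘ Sum.inl) h

end Codes

lemma Submodule.eq_of_le_of_card_ge {R M : Type*} [Semiring R] [AddCommGroup M] [Module R M]
    {p q : Submodule R M} [Finite q] (hle : p ≤ q) (hcard : Nat.card q ≤ Nat.card p) : p = q :=
  SetLike.coe_injective (Set.Finite.eq_of_subset_of_card_le (Set.toFinite _) hle hcard)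

/-- Over a finite commutative Frobenius ring of characteristic 2, [Iₙ | σ(v)] generates a
    self-dual code iff v·vᵀ = 1, i.e. v is a unitary unit of RG. -/
theorem stmt_10 (R G : Type*) [CommRing R] [Fintype R] [CharP R 2]
    [Group G] [Fintype G] [DecidableEq G]
    (hFrob : ∀ (ι : Type) [Fintype ι] (C : Submodule R (ι → R)),
      Nat.card C * Nat.card (dualCode C) = Nat.card R ^ Fintype.card ι)
    (v : MonoidAlgebra R G) :
    (Submodule.span R (Set.range fun i => Matrix.fromCols (1 : Matrix G G R) (sigmaMat v) i)
        = dualCode (Submodule.span R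
            (Set.range fun i => Matrix.fromCols (1 : Matrix G G R) (sigmaMat v) i)))
      ↔ v * transInvol v = 1 := by
  set C := span R (Set.range fun i => fromCols (1 : Matrix G G R) (sigmaMat v) i)
  have hC : Nat.card C = Nat.card R ^ Fintype.card G :=
    card_span_rows _ (vecMul_fromCols_one_injective _)
  have hD : Nat.card (dualCode C) = Nat.card R ^ Fintype.card G := by
    have h := card_mul_card_dualCode hFrob C
    rw [hC, Fintype.card_sum, pow_add] at h
    exact Nat.eq_of_mul_eq_mul_left (pow_pos Nat.card_pos _) h
  calc C = dualCode C ↔ C ≤ dualCode C :=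
        ⟨le_of_eq, fun h => eq_of_le_of_card_ge h (hD.trans hC.symm).le⟩
    _ ↔ 1 + sigmaMat v * (sigmaMat v)ᵀ = 0 := by
      rw [span_rows_le_dualCode_iff, transpose_fromCols, fromCols_mul_fromRows, transpose_one,
        one_mul]
    _ ↔ v * transInvol v = 1 := by
      rw [CharTwo.add_eq_zero, ← sigmaMat_transInvol, ← sigmaMat_mul, ← sigmaMat_one,
        sigmaMat_injective.eq_iff, eq_comm]
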